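/- arXiv:1912.09984 — 2 statements merged into one kernel-verified Lean document; each statement's English description precedes it below -/
import Mathlib

section
/- Let C be an [n,k;n_1,…,n_ℓ] sum-rank metric code over (F;K_1,…,K_ℓ) which is MSRD. Then the associated sum-matroid M_C = (K^n, ρ_C) is the uniform sum-matroid U_{n−k,n}; that is, for every L ∈ P(K^n), ρ_C(L) = Rk(L) if Rk(L) ≤ n−k, and ρ_C(L) = n−k if Rk(L) > n−k. -/
open Module

/-! Setup for sum-rank metric codes and sum-matroids.

We fix `ℓ` finite fields `K i` with a common extension `F` (given by algebra
structures), and block lengths `nv i`.  The ambient space `F^n` (with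
`n = ∑ i, nv i`) is modelled as the dependent product of the blocks `F^{nv i}`,
and an element of the product lattice `P(K^n)` is a tuple of `K i`-subspaces of
`K i ^ (nv i)`. -/

/-- The ambient space `F^n`, split into `ℓ` blocks of sizes `nv i`. -/
abbrev SRAmb (ℓ : ℕ) (nv : Fin ℓ → ℕ) (F : Type) : Type :=
  (i : Fin ℓ) → Fin (nv i) → F

/-- The product lattice `P(K^n)`: tuples `L` where `L i` is a `K i`-subspace of
`K i ^ (nv i)`. -/
abbrev SRLat (ℓ : ℕ) (nv : Fin ℓ → ℕ) (K : Fin ℓ → Type) [∀ i, Field (K i)] : Type :=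
  (i : Fin ℓ) → Submodule (K i) (Fin (nv i) → K i)

variable {ℓ : ℕ} {nv : Fin ℓ → ℕ} {F : Type} [Field F]
  {K : Fin ℓ → Type} [∀ i, Field (K i)] [∀ i, Algebra (K i) F]

/-- `Rk(L) = ∑ i, dim_{K i} (L i)`. -/
noncomputable def SRrk (L : SRLat ℓ nv K) : ℕ := ∑ i, finrank (K i) (L i)

/-- Orthogonal complement of a subspace of `k^m` with respect to the standard
dot product. -/
def SRorth {k : Type} [Field k] {m : ℕ} (W : Submodule k (Fin m → k)) :
    Submodule k (Fin m → k) where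
  carrier := {v | ∀ w ∈ W, ∑ t, v t * w t = 0}
  zero_mem' := by intro w hw; simp
  add_mem' := by
    intro a b ha hb w hw
    have h : ∑ t, (a + b) t * w t = (∑ t, a t * w t) + ∑ t, b t * w t := by
      simp [add_mul, Finset.sum_add_distrib]
    rw [h, ha w hw, hb w hw, add_zero]
  smul_mem' := by
    intro c a ha w hw
    have h : ∑ t, (c • a) t * w t = c * ∑ t, a t * w t := by
      simp [Finset.mul_sum, mul_assoc]
    rw [h, ha w hw, mul_zero]

/-- Componentwise orthogonal complement `L^⊥` in the lattice `P(K^n)`. -/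
def SRlatPerp (L : SRLat ℓ nv K) : SRLat ℓ nv K := fun i => SRorth (L i)

/-- The `i`-th component of the sum-rank support of `c ∈ F^n`: the `K i`-row
space of the coordinate matrix of the `i`-th block of `c` (described
basis-freely as the span of the images of the block of `c` under all
`K i`-linear functionals `F → K i`). -/
def SRsupp (c : SRAmb ℓ nv F) (i : Fin ℓ) : Submodule (K i) (Fin (nv i) → K i) :=
  Submodule.span (K i) {v | ∃ f : F →ₗ[K i] K i, v = fun t => f (c i t)}

/-- The sum-rank weight `srank(c) = Rk(supp(c))`. -/
noncomputable def SRwt (c : SRAmb ℓ nv F) : ℕ :=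
  ∑ i, finrank (K i) (SRsupp (K := K) c i)

/-- The sum-rank support space `V_L = {c ∈ F^n : supp(c) ⊆ L}`. -/
def SRVL (L : SRLat ℓ nv K) : Submodule F (SRAmb ℓ nv F) where
  carrier := {c | ∀ i, SRsupp (K := K) c i ≤ L i}
  zero_mem' := by
    intro i
    apply Submodule.span_le.mpr
    rintro v ⟨f, rfl⟩
    have h : (fun t => f ((0 : SRAmb ℓ nv F) i t)) = (0 : Fin (nv i) → K i) := by
      funext t; simp
    rw [h]
    exact (L i).zero_mem
  add_mem' := by
    intro a b ha hb i
    apply Submodule.span_le.mpr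
    rintro v ⟨f, rfl⟩
    have h : (fun t => f ((a + b) i t)) =
        (fun t => f (a i t)) + fun t => f (b i t) := by
      funext t; simp
    rw [h]
    exact (L i).add_mem (ha i (Submodule.subset_span ⟨f, rfl⟩))
      (hb i (Submodule.subset_span ⟨f, rfl⟩))
  smul_mem' := by
    intro x a ha i
    apply Submodule.span_le.mpr
    rintro v ⟨f, rfl⟩
    have h : (fun t => f ((x • a) i t)) =
        fun t => (f.comp (LinearMap.mulLeft (K i) x)) (a i t) := by
      funext t; simp [smul_eq_mul]
    rw [h]
    exact ha i (Submodule.subset_span ⟨_, rfl⟩)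

/-- The dual code `C^⊥` with respect to the standard bilinear form on `F^n`. -/
def SRdual (C : Submodule F (SRAmb ℓ nv F)) : Submodule F (SRAmb ℓ nv F) where
  carrier := {x | ∀ c ∈ C, ∑ i, ∑ t, x i t * c i t = 0}
  zero_mem' := by intro c hc; simp
  add_mem' := by
    intro a b ha hb c hc
    have h : ∑ i, ∑ t, (a + b) i t * c i t =
        (∑ i, ∑ t, a i t * c i t) + ∑ i, ∑ t, b i t * c i t := by
      simp [add_mul, Finset.sum_add_distrib]
    rw [h, ha c hc, hb c hc, add_zero]
  smul_mem' := by
    intro x a ha c hc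
    have h : ∑ i, ∑ t, (x • a) i t * c i t = x * ∑ i, ∑ t, a i t * c i t := by
      simp [Finset.mul_sum, mul_assoc]
    rw [h, ha c hc, mul_zero]

/-- `C(L) = {c ∈ C^⊥ : supp(c) ⊆ L^⊥} = C^⊥ ∩ V_{L^⊥}`. -/
def SRCL (C : Submodule F (SRAmb ℓ nv F)) (L : SRLat ℓ nv K) :
    Submodule F (SRAmb ℓ nv F) :=
  SRdual C ⊓ SRVL (SRlatPerp L)

/-- The projection `Π_L : F^n → F^{Rk L}`, `x ↦ x Aᵀ`, where
`A = diag(A_1, …, A_ℓ)` and `A_i` is the matrix whose rows are the chosen basis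
of `L i` over `K i`.  The target `F^{Rk L}` is indexed blockwise. -/
noncomputable def SRpi (L : SRLat ℓ nv K) :
    SRAmb ℓ nv F →ₗ[F] ((i : Fin ℓ) → Fin (finrank (K i) (L i)) → F) where
  toFun x := fun i j =>
    ∑ t, x i t * algebraMap (K i) F ((Module.finBasis (K i) (L i) j).val t)
  map_add' x y := by
    funext i j
    simp [add_mul, Finset.sum_add_distrib]
  map_smul' a x := by
    funext i j
    simp [Finset.mul_sum, mul_assoc]

/-- The rank function `ρ_C(L) = dim_F Π_L(C^⊥)` of the sum-matroid associated
to the code `C`. -/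
noncomputable def SRrho (C : Submodule F (SRAmb ℓ nv F)) (L : SRLat ℓ nv K) : ℕ :=
  finrank F (Submodule.map (SRpi (F := F) L) (SRdual C))

/-- Minimum sum-rank distance of a code. -/
noncomputable def SRminDist (K : Fin ℓ → Type) [∀ i, Field (K i)]
    [∀ i, Algebra (K i) F] (C : Submodule F (SRAmb ℓ nv F)) : ℕ :=
  sInf {w | ∃ c ∈ C, c ≠ 0 ∧ SRwt (K := K) c = w}

/-- The `r`-th generalized sum-rank weight
`d_{SR,r}(C) = min{Rk L : dim_F (C ∩ V_L) ≥ r}`. -/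
noncomputable def SRdgw (K : Fin ℓ → Type) [∀ i, Field (K i)]
    [∀ i, Algebra (K i) F] (C : Submodule F (SRAmb ℓ nv F)) (r : ℕ) : ℕ :=
  sInf {w | ∃ L : SRLat ℓ nv K, r ≤ finrank F ↥(C ⊓ SRVL L) ∧ SRrk L = w}

/-- The sum-matroid axioms (R1), (R2), (R3) for a function `ρ : P(K^n) → ℕ`. -/
def IsSumMatroid (ρ : SRLat ℓ nv K → ℕ) : Prop :=
  (∀ L, ρ L ≤ SRrk L) ∧
  (∀ L L' : SRLat ℓ nv K, L ≤ L' → ρ L ≤ ρ L') ∧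
  (∀ L L' : SRLat ℓ nv K, ρ (L ⊔ L') + ρ (L ⊓ L') ≤ ρ L + ρ L')

/-- The dual rank function `ρ*(L) = ρ(L^⊥) + Rk L − ρ(K^n)`. -/
noncomputable def SRdualRk (ρ : SRLat ℓ nv K → ℕ) (L : SRLat ℓ nv K) : ℕ :=
  ρ (SRlatPerp L) + SRrk L - ρ ⊤

/-- The nullity function `η(L) = Rk L − ρ(L)`. -/
noncomputable def SReta (ρ : SRLat ℓ nv K → ℕ) (L : SRLat ℓ nv K) : ℕ :=
  SRrk L - ρ L

/-- The `i`-th generalized weight of a sum-matroid,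
`d_i(M) = min{Rk L : η(L) = i}`. -/
noncomputable def SRgw (ρ : SRLat ℓ nv K → ℕ) (i : ℕ) : ℕ :=
  sInf {w | ∃ L : SRLat ℓ nv K, SReta ρ L = i ∧ SRrk L = w}

/-!
Rank–nullity for `Π_L` on `C^⊥`, together with `ker Π_L = V_L^⊥` and `dim_F V_L = Rk L`, gives
`ρ_C(L) = Rk L - dim_F (C ∩ V_L)`. A nonzero codeword in `V_M` has sum-rank weight at most
`Rk M`, so for an MSRD code `C ∩ V_M = 0` whenever `Rk M ≤ n - k`. This settles the case
`Rk L ≤ n - k`. Otherwise a sublattice `L' ≤ L` with `Rk L' = n - k` meets `C ∩ V_L` trivially,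
so `dim_F (C ∩ V_L) ≤ Rk L - (n - k)`, while `ρ_C(L) ≤ dim_F C^⊥ = n - k`.
-/

open Submodule Matrix

theorem Submodule.exists_le_finrank_eq {k V : Type*} [DivisionRing k] [AddCommGroup V]
    [Module k V] (W : Submodule k V) [FiniteDimensional k W] {m : ℕ} (hm : m ≤ finrank k W) :
    ∃ W' ≤ W, finrank k W' = m := by
  let b := Module.finBasis k W
  refine ⟨span k (Set.range fun j : Fin m => (b (Fin.castLE hm j) : V)), ?_, ?_⟩
  · exact span_le.mpr (Set.range_subset_iff.mpr fun j => (b _).2)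
  · rw [finrank_span_eq_card, Fintype.card_fin]
    exact (b.linearIndependent.map' W.subtype W.ker_subtype).comp _ (Fin.castLE_injective hm)

theorem Submodule.span_range_coe_finBasis {k V : Type*} [DivisionRing k] [AddCommGroup V]
    [Module k V]
    (W : Submodule k V) [FiniteDimensional k W] :
    span k (Set.range fun j => (Module.finBasis k W j : V)) = W := by
  have h := congrArg (map W.subtype) (Module.finBasis k W).span_eq
  rwa [map_span, Submodule.map_top, range_subtype, ← Set.range_comp] at h

theorem Submodule.finrank_map_add_finrank_inf_ker {k V V₂ : Type*} [DivisionRing k]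
    [AddCommGroup V] [Module k V] [AddCommGroup V₂] [Module k V₂] [FiniteDimensional k V]
    (f : V →ₗ[k] V₂) (W : Submodule k V) :
    finrank k (W.map f) + finrank k ↥(W ⊓ LinearMap.ker f) = finrank k W := by
  have h := LinearMap.finrank_range_add_finrank_ker (f ∘ₗ W.subtype)
  rwa [LinearMap.range_comp, range_subtype, LinearMap.ker_comp, ← finrank_map_subtype_eq,
    map_comap_subtype] at h

theorem Fintype.exists_le_sum_eq {ι : Type*} [Fintype ι] (d : ι → ℕ) {s : ℕ}
    (hs : s ≤ ∑ i, d i) : ∃ m ≤ d, ∑ i, m i = s := by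
  obtain ⟨g, hg, rfl⟩ := Finsupp.exists_le_degree_eq (Finsupp.equivFunOnFinite.symm d) s
    (by simpa [Finsupp.degree_eq_sum] using hs)
  exact ⟨g, fun i => hg i, (Finsupp.degree_eq_sum g).symm⟩

/-- Applied to a spanning family of `L i`, this identifies the `i`-th block of `V_L` with the
`F`-span of `L i` inside `F ^ nv i`. -/
theorem mem_span_algebraMap_comp_iff {k E ι m : Type*} [Field k] [Field E] [Algebra k E]
    [FiniteDimensional k E] (e : ι → m → k) (v : m → E) :
    v ∈ span E (Set.range fun j => algebraMap k E ∘ e j) ↔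
      ∀ f : E →ₗ[k] k, f ∘ v ∈ span k (Set.range e) := by
  constructor
  · intro hv
    -- the condition is stable under `E`-scaling: `f ∘ (a • v) = (f ∘ₗ mulLeft k a) ∘ v`
    induction hv using Submodule.span_induction with
    | mem _ hw =>
      obtain ⟨j, rfl⟩ := hw
      intro f
      have : f ∘ (algebraMap k E ∘ e j) = f 1 • e j := by
        funext t
        simp [Algebra.algebraMap_eq_smul_one, mul_comm]
      rw [this]
      exact smul_mem _ _ (subset_span ⟨j, rfl⟩)
    | zero =>
      intro f
      rw [show f ∘ (0 : m → E) = 0 by ext; simp]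
      exact zero_mem _
    | add v w _ _ hv hw =>
      intro f
      rw [show f ∘ (v + w) = f ∘ v + f ∘ w by ext; simp]
      exact add_mem (hv f) (hw f)
    | smul a v _ hv =>
      intro f
      simpa [Function.comp_def] using hv (f ∘ₗ LinearMap.mulLeft k a)
  · intro hv
    let b := Module.finBasis k E
    have hrow : ∀ a, algebraMap k E ∘ (b.coord a ∘ v) ∈
        span E (Set.range fun j => algebraMap k E ∘ e j) := by
      intro a
      have h := apply_mem_span_image_of_mem_span
        (LinearMap.compLeft (Algebra.linearMap k E) m) (hv (b.coord a))
      rw [← Set.range_comp] at h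
      exact span_le_restrictScalars k E _ h
    have hv : v = ∑ a, b a • (algebraMap k E ∘ (b.coord a ∘ v)) := by
      funext t
      conv_lhs => rw [← b.sum_repr (v t)]
      simp [Algebra.smul_def, mul_comm]
    rw [hv]
    exact sum_mem fun a _ => smul_mem _ _ (hrow a)

theorem mem_SRdual {C : Submodule F (SRAmb ℓ nv F)} {x : SRAmb ℓ nv F} :
    x ∈ SRdual C ↔ ∀ c ∈ C, ∑ i, x i ⬝ᵥ c i = 0 :=
  Iff.rfl

theorem eq_zero_of_forall_sum_dotProduct_eq_zero {x : SRAmb ℓ nv F}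
    (h : ∀ y : SRAmb ℓ nv F, ∑ i, x i ⬝ᵥ y i = 0) : x = 0 := by
  classical
  funext i t
  have hy := h (Pi.single i (Pi.single t 1))
  rw [Finset.sum_eq_single i (fun j _ hj => by simp [Pi.single_eq_of_ne hj]) (by simp)] at hy
  simpa [dotProduct_single] using hy

variable (ℓ nv F) in
noncomputable def blockDot : LinearMap.BilinForm F (SRAmb ℓ nv F) :=
  ∑ i, (dotProductBilin F F).compl₁₂ (LinearMap.proj i) (LinearMap.proj i)

theorem blockDot_apply (x y : SRAmb ℓ nv F) : blockDot ℓ nv F x y = ∑ i, x i ⬝ᵥ y i := by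
  simp [blockDot]

theorem blockDot_nondegenerate : (blockDot ℓ nv F).Nondegenerate := by
  have hrefl : (blockDot ℓ nv F).IsRefl := fun x y h => by
    simpa [blockDot_apply, dotProduct_comm] using h
  refine hrefl.nondegenerate_iff_separatingLeft.mpr fun x hx => ?_
  exact eq_zero_of_forall_sum_dotProduct_eq_zero fun y => by simpa [blockDot_apply] using hx y

theorem SRdual_eq_orthogonal (C : Submodule F (SRAmb ℓ nv F)) :
    SRdual C = (blockDot ℓ nv F).orthogonal C := by
  ext x
  simp [mem_SRdual, LinearMap.BilinForm.mem_orthogonal_iff, blockDot_apply, dotProduct_comm]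

theorem finrank_SRAmb : finrank F (SRAmb ℓ nv F) = ∑ i, nv i := by
  rw [Module.finrank_pi_fintype]
  simp

theorem finrank_add_finrank_SRdual (C : Submodule F (SRAmb ℓ nv F)) :
    finrank F C + finrank F (SRdual C) = ∑ i, nv i := by
  rw [SRdual_eq_orthogonal, LinearMap.BilinForm.finrank_orthogonal blockDot_nondegenerate,
    finrank_SRAmb]
  have := finrank_SRAmb (ℓ := ℓ) (nv := nv) (F := F) ▸ C.finrank_le
  omega

theorem SRdual_sup (A B : Submodule F (SRAmb ℓ nv F)) :
    SRdual (A ⊔ B) = SRdual A ⊓ SRdual B := by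
  ext x
  simp only [mem_inf, mem_SRdual]
  refine ⟨fun h => ⟨fun a ha => h a (mem_sup_left ha), fun b hb => h b (mem_sup_right hb)⟩,
    fun ⟨hA, hB⟩ c hc => ?_⟩
  obtain ⟨a, ha, b, hb, rfl⟩ := mem_sup.mp hc
  simp only [Pi.add_apply, dotProduct_add, Finset.sum_add_distrib, hA a ha, hB b hb, add_zero]

theorem mem_SRVL_iff {L : SRLat ℓ nv K} {c : SRAmb ℓ nv F} :
    c ∈ SRVL L ↔ ∀ i (f : F →ₗ[K i] K i), f ∘ c i ∈ L i := by
  refine forall_congr' fun i => span_le.trans ⟨fun h f => h ⟨f, rfl⟩, ?_⟩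
  rintro h _ ⟨f, rfl⟩
  exact h f

theorem SRVL_mono {L L' : SRLat ℓ nv K} (h : L' ≤ L) : SRVL (F := F) L' ≤ SRVL L :=
  fun _ hc i => (hc i).trans (h i)

/-- The generator matrix `A_i` of `L i` (rows: the basis used by `SRpi`), with entries in `F`.
Thus `Π_L` is `x ↦ A x` blockwise, and `SRlift L : y ↦ y A` is its adjoint. -/
noncomputable def SRgenMat (L : SRLat ℓ nv K) (i : Fin ℓ) :
    Matrix (Fin (finrank (K i) (L i))) (Fin (nv i)) F :=
  fun j => algebraMap (K i) F ∘ (Module.finBasis (K i) (L i) j : Fin (nv i) → K i)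

theorem SRpi_apply (L : SRLat ℓ nv K) (x : SRAmb ℓ nv F) (i : Fin ℓ) :
    SRpi L x i = SRgenMat L i *ᵥ x i := by
  funext j
  simp [SRpi, SRgenMat, Matrix.mulVec, dotProduct, mul_comm]

noncomputable def SRlift (L : SRLat ℓ nv K) :
    SRAmb ℓ (fun i => finrank (K i) (L i)) F →ₗ[F] SRAmb ℓ nv F :=
  LinearMap.pi fun i => (SRgenMat L i).vecMulLinear ∘ₗ LinearMap.proj i

theorem SRlift_apply (L : SRLat ℓ nv K) (y : SRAmb ℓ (fun i => finrank (K i) (L i)) F)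
    (i : Fin ℓ) : SRlift L y i = y i ᵥ* SRgenMat L i :=
  rfl

theorem SRlift_injective (L : SRLat ℓ nv K) : Function.Injective (SRlift (F := F) L) := by
  have hrows : ∀ i, Function.Injective (SRgenMat (F := F) L i).vecMul := fun i => by
    have hbasis : LinearIndependent (K i)
        fun j => (Module.finBasis (K i) (L i) j : Fin (nv i) → K i) :=
      (Module.finBasis (K i) (L i)).linearIndependent.map' (L i).subtype (L i).ker_subtype
    rw [Matrix.vecMul_injective_iff]
    exact linearIndependent_algebraMap_comp_iff.mpr hbasis
  exact fun y y' h => funext fun i => hrows i (congrFun h i)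

theorem range_SRlift [∀ i, FiniteDimensional (K i) F] (L : SRLat ℓ nv K) :
    LinearMap.range (SRlift (F := F) L) = SRVL L := by
  ext c
  have hblock : ∀ i, c i ∈ LinearMap.range (SRgenMat (F := F) L i).vecMulLinear ↔
      ∀ f : F →ₗ[K i] K i, f ∘ c i ∈ L i := fun i => by
    rw [range_vecMulLinear]
    exact (mem_span_algebraMap_comp_iff _ _).trans
      (forall_congr' fun f => by rw [Submodule.span_range_coe_finBasis])
  simp only [mem_SRVL_iff, ← hblock, LinearMap.mem_range]
  constructor
  · rintro ⟨y, rfl⟩ i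
    exact ⟨y i, rfl⟩
  · intro h
    choose y hy using h
    exact ⟨y, funext hy⟩

theorem finrank_SRVL [∀ i, FiniteDimensional (K i) F] (L : SRLat ℓ nv K) :
    finrank F (SRVL (F := F) L) = SRrk L := by
  rw [← range_SRlift, LinearMap.finrank_range_of_inj (SRlift_injective L), finrank_SRAmb, SRrk]

theorem sum_dotProduct_SRlift (L : SRLat ℓ nv K) (x : SRAmb ℓ nv F)
    (y : SRAmb ℓ (fun i => finrank (K i) (L i)) F) :
    ∑ i, x i ⬝ᵥ SRlift L y i = ∑ i, SRpi L x i ⬝ᵥ y i := by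
  refine Finset.sum_congr rfl fun i _ => ?_
  rw [SRlift_apply, SRpi_apply, dotProduct_comm, ← dotProduct_mulVec, dotProduct_comm]

theorem ker_SRpi [∀ i, FiniteDimensional (K i) F] (L : SRLat ℓ nv K) :
    LinearMap.ker (SRpi (F := F) L) = SRdual (SRVL L) := by
  ext x
  rw [LinearMap.mem_ker, ← range_SRlift, mem_SRdual]
  simp only [LinearMap.mem_range, forall_exists_index, forall_apply_eq_imp_iff,
    sum_dotProduct_SRlift]
  exact ⟨fun h y => by simp [h], eq_zero_of_forall_sum_dotProduct_eq_zero⟩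

theorem SRrho_add_finrank_inf_SRVL [∀ i, FiniteDimensional (K i) F]
    (C : Submodule F (SRAmb ℓ nv F)) (L : SRLat ℓ nv K) :
    SRrho C L + finrank F ↥(C ⊓ SRVL L) = SRrk L := by
  have hρ := (SRdual C).finrank_map_add_finrank_inf_ker (SRpi L)
  rw [ker_SRpi, ← SRdual_sup] at hρ
  have hC := finrank_add_finrank_SRdual C
  have hCV := finrank_add_finrank_SRdual (C ⊔ SRVL L)
  have hsup := finrank_sup_add_finrank_inf_eq C (SRVL (F := F) L)
  rw [finrank_SRVL] at hsup
  rw [SRrho]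
  omega

theorem SRrho_add_finrank_le (C : Submodule F (SRAmb ℓ nv F)) (L : SRLat ℓ nv K) :
    SRrho C L + finrank F C ≤ ∑ i, nv i := by
  have := finrank_add_finrank_SRdual C
  have := finrank_map_le (SRpi L) (SRdual C)
  rw [SRrho]
  omega

theorem SRwt_le_SRrk {L : SRLat ℓ nv K} {c : SRAmb ℓ nv F} (hc : c ∈ SRVL L) :
    SRwt (K := K) c ≤ SRrk L :=
  Finset.sum_le_sum fun i _ => finrank_mono (hc i)

theorem inf_SRVL_eq_bot_of_SRrk_lt {C : Submodule F (SRAmb ℓ nv F)} {L : SRLat ℓ nv K}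
    (hL : SRrk L < SRminDist K C) : C ⊓ SRVL L = ⊥ := by
  refine eq_bot_iff.mpr fun c hc => (mem_bot F).mpr ?_
  by_contra hne
  have hd : SRminDist K C ≤ SRwt (K := K) c := Nat.sInf_le ⟨c, hc.1, hne, rfl⟩
  have := SRwt_le_SRrk hc.2
  omega

theorem exists_le_SRrk_eq (L : SRLat ℓ nv K) {s : ℕ} (hs : s ≤ SRrk L) :
    ∃ L' ≤ L, SRrk L' = s := by
  obtain ⟨m, hm, rfl⟩ := Fintype.exists_le_sum_eq (fun i => finrank (K i) (L i)) hs
  choose L' hL' hrk using fun i => (L i).exists_le_finrank_eq (hm i)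
  exact ⟨L', hL', Finset.sum_congr rfl fun i _ => hrk i⟩

theorem finrank_inf_SRVL_add_le [∀ i, FiniteDimensional (K i) F]
    {C : Submodule F (SRAmb ℓ nv F)} {L L' : SRLat ℓ nv K} (hL' : L' ≤ L)
    (hrk : SRrk L' < SRminDist K C) :
    finrank F ↥(C ⊓ SRVL L) + SRrk L' ≤ SRrk L := by
  have hdisj : (C ⊓ SRVL L) ⊓ SRVL L' = ⊥ :=
    eq_bot_iff.mpr fun c hc => (inf_SRVL_eq_bot_of_SRrk_lt hrk).le ⟨hc.1.1, hc.2⟩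
  have hsum := finrank_sup_add_finrank_inf_eq (C ⊓ SRVL L) (SRVL (F := F) L')
  have hle : finrank F ↥((C ⊓ SRVL L) ⊔ SRVL L') ≤ finrank F (SRVL (F := F) L) :=
    finrank_mono (sup_le inf_le_right (SRVL_mono hL'))
  rw [hdisj, finrank_bot, finrank_SRVL] at hsum
  rw [finrank_SRVL] at hle
  omega

theorem stmt16_msrd_uniform_general
    {ℓ : ℕ} {nv : Fin ℓ → ℕ}
    {F : Type} [Field F]
    {K : Fin ℓ → Type} [∀ i, Field (K i)]
    [∀ i, Algebra (K i) F] [∀ i, FiniteDimensional (K i) F]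
    (C : Submodule F (SRAmb ℓ nv F)) (k : ℕ) (hk : Module.finrank F C = k)
    (hmsrd : SRminDist K C = (∑ i, nv i) - k + 1)
    (L : SRLat ℓ nv K) :
    (SRrk L ≤ (∑ i, nv i) - k → SRrho C L = SRrk L) ∧
    ((∑ i, nv i) - k < SRrk L → SRrho C L = (∑ i, nv i) - k) := by
  have hρ := SRrho_add_finrank_inf_SRVL C L
  have hρ_le := SRrho_add_finrank_le C L
  refine ⟨fun hle => ?_, fun hlt => ?_⟩
  · rw [inf_SRVL_eq_bot_of_SRrk_lt (by omega), finrank_bot] at hρ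
    omega
  · obtain ⟨L', hL', hrk⟩ := exists_le_SRrk_eq L hlt.le
    have := finrank_inf_SRVL_add_le (C := C) (F := F) hL' (by omega)
    omega

/-- If an `[n,k]` sum-rank metric code `C` is MSRD, then the
associated sum-matroid `M_C = (K^n, ρ_C)` is the uniform sum-matroid
`U_{n−k,n}`: `ρ_C(L) = Rk L` whenever `Rk L ≤ n − k`, and `ρ_C(L) = n − k`
whenever `Rk L > n − k`. -/
theorem stmt16_msrd_uniform
    {ℓ : ℕ} (hℓ : 0 < ℓ) {nv : Fin ℓ → ℕ} (hnv : ∀ i, 0 < nv i)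
    {F : Type} [Field F] [Finite F]
    {K : Fin ℓ → Type} [∀ i, Field (K i)] [∀ i, Finite (K i)]
    [∀ i, Algebra (K i) F] [∀ i, FiniteDimensional (K i) F]
    (C : Submodule F (SRAmb ℓ nv F)) (k : ℕ) (hk : Module.finrank F C = k)
    (hmsrd : SRminDist K C = (∑ i, nv i) - k + 1)
    (L : SRLat ℓ nv K) :
    (SRrk L ≤ (∑ i, nv i) - k → SRrho C L = SRrk L) ∧
    ((∑ i, nv i) - k < SRrk L → SRrho C L = (∑ i, nv i) - k) :=
  stmt16_msrd_uniform_general C k hk hmsrd L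
end

section
/- (Monotonicity for sum-rank metric codes.) Let C be an [n,k;n_1,…,n_ℓ] sum-rank metric code over (F;K_1,…,K_ℓ) with k > 0, and let d_i = d_{SR,i}(C) for i = 1,…,k. Then 1 ≤ d_1 < d_2 < ⋯ < d_k ≤ n. -/
open Module

variable {ℓ : ℕ} {nv : Fin ℓ → ℕ} {F : Type} [Field F]
  {K : Fin ℓ → Type} [∀ i, Field (K i)] [∀ i, Algebra (K i) F]

/-! Cutting a nonzero component `L i` of `L` with a coordinate hyperplane `{v | v t = 0}` lowers
`Rk L` by exactly one and `dim (C ∩ V_L)` by at most one: the codewords of `C ∩ V_L` satisfying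
the single linear condition `c_{i,t} = 0` already lie in `V` of the smaller lattice element.
Applied to an `L` attaining `d_{r+1}` (nonzero, since `V_0 = 0`), this gives `d_r < d_{r+1}`
for all `r < k`, including `d_0 = 0 < d_1`. The top element gives `d_k ≤ n`. -/

theorem Submodule.finrank_le_finrank_inf_ker_add_one {k M : Type} [DivisionRing k]
    [AddCommGroup M] [Module k M] [FiniteDimensional k M] (X : Submodule k M) (ψ : M →ₗ[k] k) :
    finrank k X ≤ finrank k ↥(X ⊓ LinearMap.ker ψ) + 1 := by
  have h_sup_inf := Submodule.finrank_sup_add_finrank_inf_eq X (LinearMap.ker ψ)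
  have h_sup_le := Submodule.finrank_le (X ⊔ LinearMap.ker ψ)
  have h_rank_nullity := LinearMap.finrank_range_add_finrank_ker ψ
  have h_range_le : finrank k ↥(LinearMap.range ψ) ≤ 1 :=
    (Submodule.finrank_le _).trans_eq (finrank_self k)
  omega

theorem Submodule.finrank_inf_ker_add_one_eq {k M : Type} [DivisionRing k]
    [AddCommGroup M] [Module k M] [FiniteDimensional k M] {X : Submodule k M} {ψ : M →ₗ[k] k}
    {v : M} (hv : v ∈ X) (hψv : ψ v ≠ 0) :
    finrank k ↥(X ⊓ LinearMap.ker ψ) + 1 = finrank k X := by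
  have h_lt : X ⊓ LinearMap.ker ψ < X :=
    inf_lt_left.mpr fun h => hψv (h hv)
  have := Submodule.finrank_lt_finrank_of_lt h_lt
  have := X.finrank_le_finrank_inf_ker_add_one ψ
  omega

theorem SRrk_update_add [DecidableEq (Fin ℓ)] (L : SRLat ℓ nv K) (i : Fin ℓ)
    (W : Submodule (K i) (Fin (nv i) → K i)) :
    SRrk (Function.update L i W) + finrank (K i) (L i) = SRrk L + finrank (K i) W := by
  have h_update : (fun j => finrank (K j) (Function.update L i W j)) =
      Function.update (fun j => finrank (K j) (L j)) i (finrank (K i) W) :=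
    funext (Function.apply_update (fun j (V : Submodule (K j) _) => finrank (K j) V) L i W)
  rw [SRrk, SRrk, h_update, Finset.sum_update_of_mem (Finset.mem_univ i),
    ← Finset.add_sum_erase _ _ (Finset.mem_univ i), Finset.sdiff_singleton_eq_erase]
  ring

theorem SRrk_top : SRrk (⊤ : SRLat ℓ nv K) = ∑ i, nv i := by
  simp [SRrk]

theorem SRsupp_eq_bot_iff (c : SRAmb ℓ nv F) (i : Fin ℓ) :
    SRsupp (K := K) c i = ⊥ ↔ c i = 0 := by
  simp only [SRsupp, Submodule.span_eq_bot, Set.mem_ofPred_eq, forall_exists_index]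
  constructor
  · intro h
    funext t
    exact (Module.forall_dual_apply_eq_zero_iff (K i) (c i t)).mp
      fun f => congrFun (h _ f rfl) t
  · rintro h _ f rfl
    funext t
    simp [h]

theorem SRsupp_le_ker_proj {c : SRAmb ℓ nv F} {i : Fin ℓ} {t : Fin (nv i)} (h : c i t = 0) :
    SRsupp (K := K) c i ≤ LinearMap.ker (LinearMap.proj t) := by
  rw [SRsupp, Submodule.span_le]
  rintro _ ⟨f, rfl⟩
  simp [h]

theorem SRVL_top : SRVL (F := F) (⊤ : SRLat ℓ nv K) = ⊤ :=
  eq_top_iff.mpr fun _ _ _ => le_top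

theorem SRVL_bot : SRVL (F := F) (⊥ : SRLat ℓ nv K) = ⊥ := by
  refine eq_bot_iff.mpr fun c hc => ?_
  funext i
  exact (SRsupp_eq_bot_iff c i).mp (le_bot_iff.mp (hc i))

theorem exists_SRrk_add_one_eq_and_finrank_le (C : Submodule F (SRAmb ℓ nv F))
    {L : SRLat ℓ nv K} (hL : L ≠ ⊥) :
    ∃ L' : SRLat ℓ nv K, SRrk L' + 1 = SRrk L ∧
      finrank F ↥(C ⊓ SRVL L) ≤ finrank F ↥(C ⊓ SRVL L') + 1 := by
  classical
  obtain ⟨i, hi⟩ := Function.ne_iff.mp hL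
  obtain ⟨v, hvL, hv0⟩ := (Submodule.ne_bot_iff _).mp hi
  obtain ⟨t, hvt⟩ := Function.ne_iff.mp hv0
  let W := L i ⊓ LinearMap.ker (LinearMap.proj t)
  refine ⟨Function.update L i W, ?_, ?_⟩
  · have := SRrk_update_add L i W
    have : finrank (K i) W + 1 = finrank (K i) (L i) :=
      Submodule.finrank_inf_ker_add_one_eq hvL hvt
    omega
  · let ψ : SRAmb ℓ nv F →ₗ[F] F :=
      LinearMap.proj (R := F) t ∘ₗ LinearMap.proj (R := F) (φ := fun j => Fin (nv j) → F) i
    have h_sub : C ⊓ SRVL L ⊓ LinearMap.ker ψ ≤ C ⊓ SRVL (Function.update L i W) := by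
      rintro c ⟨⟨hcC, hcL⟩, hcψ⟩
      refine ⟨hcC, fun j => ?_⟩
      rcases eq_or_ne j i with rfl | hj
      · rw [Function.update_self]
        exact le_inf (hcL j) (SRsupp_le_ker_proj hcψ)
      · rw [Function.update_of_ne hj]
        exact hcL j
    calc finrank F ↥(C ⊓ SRVL L)
        ≤ finrank F ↥(C ⊓ SRVL L ⊓ LinearMap.ker ψ) + 1 :=
          Submodule.finrank_le_finrank_inf_ker_add_one _ ψ
      _ ≤ finrank F ↥(C ⊓ SRVL (Function.update L i W)) + 1 := by
          gcongr
          exact Submodule.finrank_mono h_sub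

section GeneralizedWeights

variable {C : Submodule F (SRAmb ℓ nv F)} {r : ℕ}

theorem SRdgw_le_SRrk {L : SRLat ℓ nv K} (h : r ≤ finrank F ↥(C ⊓ SRVL L)) :
    SRdgw K C r ≤ SRrk L :=
  Nat.sInf_le ⟨L, h, rfl⟩

theorem exists_SRrk_eq_SRdgw (h : r ≤ finrank F C) :
    ∃ L : SRLat ℓ nv K, r ≤ finrank F ↥(C ⊓ SRVL L) ∧ SRrk L = SRdgw K C r :=
  Nat.sInf_mem (s := {w | ∃ L : SRLat ℓ nv K, r ≤ finrank F ↥(C ⊓ SRVL L) ∧ SRrk L = w})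
    ⟨_, ⊤, by rwa [SRVL_top, inf_top_eq], rfl⟩

theorem SRdgw_le_sum (h : r ≤ finrank F C) : SRdgw K C r ≤ ∑ i, nv i := by
  rw [← SRrk_top (K := K)]
  exact SRdgw_le_SRrk (by rwa [SRVL_top, inf_top_eq])

theorem SRdgw_lt_SRdgw_succ (h : r + 1 ≤ finrank F C) :
    SRdgw K C r < SRdgw K C (r + 1) := by
  obtain ⟨L, hL, hLrk⟩ := exists_SRrk_eq_SRdgw (K := K) h
  have hL_ne : L ≠ ⊥ := by
    rintro rfl
    rw [SRVL_bot, inf_bot_eq, finrank_bot] at hL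
    omega
  obtain ⟨L', hL'rk, hL'⟩ := exists_SRrk_add_one_eq_and_finrank_le C hL_ne
  have : SRdgw K C r ≤ SRrk L' := SRdgw_le_SRrk (by omega)
  omega

end GeneralizedWeights

theorem stmt18_monotonicity_code_general
    {ℓ : ℕ} {nv : Fin ℓ → ℕ}
    {F : Type} [Field F]
    {K : Fin ℓ → Type} [∀ i, Field (K i)]
    [∀ i, Algebra (K i) F]
    (C : Submodule F (SRAmb ℓ nv F)) (k : ℕ) (hk : Module.finrank F C = k)
    (hk0 : 0 < k) :
    1 ≤ SRdgw K C 1 ∧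
    (∀ i : ℕ, 1 ≤ i → i < k → SRdgw K C i < SRdgw K C (i + 1)) ∧
    SRdgw K C k ≤ ∑ i, nv i := by
  subst hk
  exact ⟨Nat.one_le_of_lt (SRdgw_lt_SRdgw_succ (K := K) (r := 0) hk0),
    fun i _ hik => SRdgw_lt_SRdgw_succ hik, SRdgw_le_sum le_rfl⟩

/-- Monotonicity for sum-rank metric codes: For an `[n,k]`
sum-rank metric code `C` with `k > 0`, the generalized sum-rank weights
satisfy `1 ≤ d_1 < d_2 < ⋯ < d_k ≤ n`. -/
theorem stmt18_monotonicity_code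
    {ℓ : ℕ} (hℓ : 0 < ℓ) {nv : Fin ℓ → ℕ} (hnv : ∀ i, 0 < nv i)
    {F : Type} [Field F] [Finite F]
    {K : Fin ℓ → Type} [∀ i, Field (K i)] [∀ i, Finite (K i)]
    [∀ i, Algebra (K i) F] [∀ i, FiniteDimensional (K i) F]
    (C : Submodule F (SRAmb ℓ nv F)) (k : ℕ) (hk : Module.finrank F C = k)
    (hk0 : 0 < k) :
    1 ≤ SRdgw K C 1 ∧
    (∀ i : ℕ, 1 ≤ i → i < k → SRdgw K C i < SRdgw K C (i + 1)) ∧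
    SRdgw K C k ≤ ∑ i, nv i :=
  stmt18_monotonicity_code_general C k hk hk0
end
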